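/- Let F : ℝ → ℝ be 2π-periodic and Lebesgue integrable on [−π, π], and suppose there exist ε ∈ (0, π] and M > 0 such that F is differentiable on [−ε, ε] with |F(ω)| ≤ M and |F′(ω)| ≤ M for all |ω| ≤ ε. Then there exists a constant C > 0 such that for every integer T ≥ 2, | ∫_{−π}^{π} F(ω) · T^{−1} |∑_{t=1}^{T} exp(i t ω)|² dω − 2π F(0) | ≤ C T^{−1} log T. -/

import Mathlib

/-!
Write the error as `∫ (F ω - F 0) K_T(ω) dω`, using `∫ K_T = 2π` (orthogonality of the
`cos (kω)`). The kernel satisfies `K_T ≤ T` and, since `|∑ e^{itω}| ≤ 1 / |sin (ω/2)| ≤ π / |ω|`,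
also `T ω² K_T ≤ π²`; together `K_T(ω) ≤ 2π²T / (π² + T²ω²)`. Near `0` the mean value theorem gives
`|F ω - F 0| ≤ M |ω|`, and `|ω| · 2π²T / (π² + T²ω²)` has the primitive
`(π²/T) log (π² + T²ω²)`, which yields the `T⁻¹ log T` term; away from `0`, `K_T ≤ π² / (T ε²)`
and integrability of `F` give an `O(T⁻¹)` term.
-/

open Real Finset MeasureTheory

noncomputable section

def expSum (T : ℕ) (ω : ℝ) : ℂ :=
  ∑ t ∈ Icc 1 T, Complex.exp (Complex.I * (t : ℂ) * (ω : ℂ))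

def fejerKernel (T : ℕ) (ω : ℝ) : ℝ := (T : ℝ)⁻¹ * ‖expSum T ω‖ ^ 2

def fejerMajorant (T : ℕ) (ω : ℝ) : ℝ := 2 * π ^ 2 * T / (π ^ 2 + T ^ 2 * ω ^ 2)

end

lemma expSum_eq_sum_pow (T : ℕ) (ω : ℝ) :
    expSum T ω = ∑ t ∈ Icc 1 T, Complex.exp (Complex.I * ω) ^ t := by
  refine sum_congr rfl fun t _ => ?_
  rw [← Complex.exp_nat_mul]
  ring_nf

lemma norm_expSum_le (T : ℕ) (ω : ℝ) : ‖expSum T ω‖ ≤ T := by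
  rw [expSum_eq_sum_pow]
  refine (norm_sum_le _ _).trans ?_
  simp [Complex.norm_exp_I_mul_ofReal]

lemma sum_Icc_pow_mul_sub_one (z : ℂ) (T : ℕ) :
    (∑ t ∈ Icc 1 T, z ^ t) * (z - 1) = z * (z ^ T - 1) := by
  induction T with
  | zero => simp
  | succ n ih =>
    rw [sum_Icc_succ_top (Nat.le_add_left 1 n), add_mul, ih]
    ring

lemma norm_expSum_mul_abs_sin_le (T : ℕ) (ω : ℝ) :
    ‖expSum T ω‖ * |sin (ω / 2)| ≤ 1 := by
  set z := Complex.exp (Complex.I * ω)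
  have hz : ‖z‖ = 1 := Complex.norm_exp_I_mul_ofReal ω
  have hsub : ‖z - 1‖ = 2 * |sin (ω / 2)| := by
    rw [Complex.norm_exp_I_mul_ofReal_sub_one, norm_mul, Real.norm_eq_abs]; norm_num
  have hpow : ‖z ^ T - 1‖ ≤ 2 := by
    calc ‖z ^ T - 1‖ ≤ ‖z ^ T‖ + ‖(1 : ℂ)‖ := norm_sub_le _ _
      _ = 2 := by rw [norm_pow, hz]; norm_num
  have key : ‖expSum T ω‖ * (2 * |sin (ω / 2)|) ≤ 2 := by
    rw [← hsub, ← norm_mul, expSum_eq_sum_pow, sum_Icc_pow_mul_sub_one, norm_mul, hz, one_mul]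
    exact hpow
  linarith

lemma abs_mul_norm_expSum_le (T : ℕ) {ω : ℝ} (hω : |ω| ≤ π) :
    |ω| * ‖expSum T ω‖ ≤ π := by
  have hsin : |ω| / π ≤ |sin (ω / 2)| := by
    have := mul_abs_le_abs_sin (x := ω / 2) (by rw [abs_div]; norm_num; linarith)
    rw [abs_div, abs_two] at this
    convert this using 1
    field_simp
  calc |ω| * ‖expSum T ω‖ = π * (‖expSum T ω‖ * (|ω| / π)) := by field_simp
    _ ≤ π * (‖expSum T ω‖ * |sin (ω / 2)|) := by gcongr
    _ ≤ π * 1 := by gcongr; exact norm_expSum_mul_abs_sin_le T ω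
    _ = π := mul_one π

lemma fejerKernel_nonneg (T : ℕ) (ω : ℝ) : 0 ≤ fejerKernel T ω := by
  unfold fejerKernel; positivity

lemma continuous_fejerKernel (T : ℕ) : Continuous (fejerKernel T) := by
  unfold fejerKernel expSum; fun_prop

lemma fejerKernel_le (T : ℕ) (ω : ℝ) : fejerKernel T ω ≤ T := by
  unfold fejerKernel
  calc (T : ℝ)⁻¹ * ‖expSum T ω‖ ^ 2 ≤ (T : ℝ)⁻¹ * (T : ℝ) ^ 2 := by
        gcongr; exact norm_expSum_le T ω
    _ = (T : ℝ) := by rw [sq, ← mul_assoc, inv_mul_mul_self]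

lemma mul_sq_mul_fejerKernel_le (T : ℕ) {ω : ℝ} (hω : |ω| ≤ π) :
    T * ω ^ 2 * fejerKernel T ω ≤ π ^ 2 := by
  unfold fejerKernel
  have h := abs_mul_norm_expSum_le T hω
  calc T * ω ^ 2 * ((T : ℝ)⁻¹ * ‖expSum T ω‖ ^ 2)
      = (T * (T : ℝ)⁻¹) * (|ω| * ‖expSum T ω‖) ^ 2 := by rw [mul_pow, sq_abs]; ring
    _ ≤ 1 * π ^ 2 := by gcongr; exact mul_inv_le_one
    _ = π ^ 2 := one_mul _

lemma fejerKernel_le_fejerMajorant (T : ℕ) {ω : ℝ} (hω : |ω| ≤ π) :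
    fejerKernel T ω ≤ fejerMajorant T ω := by
  rw [fejerMajorant, le_div_iff₀ (by positivity)]
  have h1 := fejerKernel_le T ω
  have h2 := mul_sq_mul_fejerKernel_le T hω
  nlinarith [pi_pos]

lemma fejerKernel_le_div_sq {T : ℕ} (hT : T ≠ 0) {ε ω : ℝ} (hε : 0 < ε) (hεω : ε ≤ |ω|)
    (hω : |ω| ≤ π) : fejerKernel T ω ≤ π ^ 2 / (T * ε ^ 2) := by
  have hT' : (0 : ℝ) < T := Nat.cast_pos.mpr (Nat.pos_of_ne_zero hT)
  rw [le_div_iff₀ (by positivity)]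
  have hsq : ε ^ 2 ≤ ω ^ 2 := by rw [← sq_abs ω]; gcongr
  calc fejerKernel T ω * (T * ε ^ 2) ≤ T * ω ^ 2 * fejerKernel T ω := by
        have := fejerKernel_nonneg T ω
        rw [mul_comm]; gcongr
    _ ≤ π ^ 2 := mul_sq_mul_fejerKernel_le T hω

lemma sq_norm_expSum (T : ℕ) (ω : ℝ) :
    ‖expSum T ω‖ ^ 2 = ∑ t ∈ Icc 1 T, ∑ s ∈ Icc 1 T, cos (((t : ℤ) - s : ℤ) * ω) := by
  rw [Complex.sq_norm, ← Complex.ofReal_re (Complex.normSq _), ← Complex.mul_conj, expSum,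
    map_sum, sum_mul_sum, Complex.re_sum]
  refine sum_congr rfl fun t _ => ?_
  rw [Complex.re_sum]
  refine sum_congr rfl fun s _ => ?_
  rw [← Complex.exp_conj, ← Complex.exp_add, ← Complex.exp_ofReal_mul_I_re]
  congr 2
  simp only [map_mul, Complex.conj_I, Complex.conj_ofReal, map_natCast]
  push_cast
  ring

lemma integral_cos_int_mul (k : ℤ) :
    ∫ ω in (-π)..π, cos (k * ω) = if k = 0 then 2 * π else 0 := by
  split_ifs with hk
  · simp [hk]; ring
  · have hk' : (k : ℝ) ≠ 0 := Int.cast_ne_zero.mpr hk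
    rw [intervalIntegral.integral_comp_mul_left (fun x => cos x) hk', integral_cos, mul_neg,
      sin_neg, sin_int_mul_pi]
    simp

lemma integral_fejerKernel {T : ℕ} (hT : T ≠ 0) : ∫ ω in (-π)..π, fejerKernel T ω = 2 * π := by
  have hint {f : ℝ → ℝ} (hf : Continuous f) : IntervalIntegrable f volume (-π) π :=
    hf.intervalIntegrable _ _
  have hsum : ∫ ω in (-π)..π, ‖expSum T ω‖ ^ 2 = T * (2 * π) := by
    simp_rw [sq_norm_expSum]
    rw [intervalIntegral.integral_finsetSum fun t _ => hint (by fun_prop)]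
    have hrow : ∀ t ∈ Icc 1 T,
        ∫ ω in (-π)..π, ∑ s ∈ Icc 1 T, cos (((t : ℤ) - s : ℤ) * ω) = 2 * π := fun t ht => by
      rw [intervalIntegral.integral_finsetSum fun s _ => hint (by fun_prop)]
      simp only [integral_cos_int_mul, sub_eq_zero, Nat.cast_inj, sum_ite_eq, if_pos ht]
    rw [sum_congr rfl hrow]
    simp
  rw [show fejerKernel T = fun ω => (T : ℝ)⁻¹ * ‖expSum T ω‖ ^ 2 from rfl,
    intervalIntegral.integral_const_mul, hsum, inv_mul_cancel_left₀ (Nat.cast_ne_zero.mpr hT)]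

lemma integral_even_eq_two_mul {f : ℝ → ℝ} (hf : ∀ x, f (-x) = f x) {a : ℝ}
    (hint : IntervalIntegrable f volume (-a) a) :
    ∫ x in (-a)..a, f x = 2 * ∫ x in 0..a, f x := by
  have h0 : (0 : ℝ) ∈ Set.uIcc (-a) a := by
    rcases le_total 0 a with h | h <;> simp [h]
  have hleft := hint.mono_set (Set.uIcc_subset_uIcc Set.left_mem_uIcc h0)
  have hright := hint.mono_set (Set.uIcc_subset_uIcc h0 Set.right_mem_uIcc)
  rw [← intervalIntegral.integral_add_adjacent_intervals hleft hright, two_mul]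
  congr 1
  simpa [hf] using (intervalIntegral.integral_comp_neg (a := 0) (b := a) f).symm

lemma continuous_abs_mul_fejerMajorant (T : ℕ) :
    Continuous fun ω => |ω| * fejerMajorant T ω := by
  unfold fejerMajorant
  exact continuous_abs.mul (continuous_const.div (by fun_prop) fun ω => by positivity)

lemma integral_abs_mul_fejerMajorant {T : ℕ} (hT : T ≠ 0) :
    ∫ ω in (-π)..π, |ω| * fejerMajorant T ω = 2 * π ^ 2 / T * log (1 + T ^ 2) := by
  have hT' : (T : ℝ) ≠ 0 := Nat.cast_ne_zero.mpr hT
  have hden (ω : ℝ) : π ^ 2 + T ^ 2 * ω ^ 2 ≠ 0 := by positivity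
  have hcont := continuous_abs_mul_fejerMajorant T
  rw [integral_even_eq_two_mul (fun ω => by simp [fejerMajorant]) (hcont.intervalIntegrable _ _)]
  have hderiv : ∀ ω ∈ Set.uIcc 0 π, HasDerivAt (fun ω => π ^ 2 / T * log (π ^ 2 + T ^ 2 * ω ^ 2))
      (|ω| * fejerMajorant T ω) ω := by
    intro ω hω
    rw [Set.uIcc_of_le pi_pos.le] at hω
    have := ((hasDerivAt_pow 2 ω).const_mul ((T : ℝ) ^ 2) |>.const_add (π ^ 2)).log (hden ω)
    refine (this.const_mul (π ^ 2 / T)).congr_deriv ?_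
    rw [abs_of_nonneg hω.1, fejerMajorant]
    field_simp
    ring
  rw [intervalIntegral.integral_eq_sub_of_hasDerivAt hderiv
    (hcont.intervalIntegrable _ _), ← mul_sub, ← log_div (hden π) (hden 0)]
  have hratio : (π ^ 2 + T ^ 2 * π ^ 2) / (π ^ 2 + T ^ 2 * 0 ^ 2) = 1 + (T : ℝ) ^ 2 := by
    field_simp; ring
  rw [hratio]
  ring

section LocallyLipschitzAtZero

variable {f : ℝ → ℝ} {ε M : ℝ}

lemma abs_mul_fejerKernel_le (hε : 0 < ε) (hM : 0 ≤ M)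
    (hnear : ∀ ω ∈ Set.Icc (-ε) ε, |f ω| ≤ M * |ω|) {T : ℕ} (hT : T ≠ 0) {ω : ℝ}
    (hω : |ω| ≤ π) :
    |f ω| * fejerKernel T ω ≤ M * (|ω| * fejerMajorant T ω) + π ^ 2 / (T * ε ^ 2) * |f ω| := by
  have hK := fejerKernel_nonneg T ω
  have hmaj : 0 ≤ fejerMajorant T ω := hK.trans (fejerKernel_le_fejerMajorant T hω)
  rcases le_or_gt |ω| ε with hωε | hεω
  · have hfar : 0 ≤ π ^ 2 / (T * ε ^ 2) * |f ω| := by positivity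
    calc |f ω| * fejerKernel T ω ≤ M * |ω| * fejerMajorant T ω :=
          mul_le_mul (hnear ω (abs_le.mp hωε)) (fejerKernel_le_fejerMajorant T hω) hK
            (by positivity)
      _ ≤ _ := by rw [mul_assoc]; linarith
  · have hclose : 0 ≤ M * (|ω| * fejerMajorant T ω) := by positivity
    calc |f ω| * fejerKernel T ω ≤ |f ω| * (π ^ 2 / (T * ε ^ 2)) := by
          gcongr; exact fejerKernel_le_div_sq hT hε hεω.le hω
      _ ≤ _ := by rw [mul_comm]; linarith

lemma integral_abs_mul_fejerKernel_le (hf : IntervalIntegrable f volume (-π) π) (hε : 0 < ε)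
    (hM : 0 ≤ M) (hnear : ∀ ω ∈ Set.Icc (-ε) ε, |f ω| ≤ M * |ω|) {T : ℕ} (hT : T ≠ 0) :
    ∫ ω in (-π)..π, |f ω| * fejerKernel T ω ≤
      M * (2 * π ^ 2 / T * log (1 + T ^ 2)) + π ^ 2 / (T * ε ^ 2) * ∫ ω in (-π)..π, |f ω| := by
  have hmaj := (continuous_abs_mul_fejerMajorant T).intervalIntegrable (μ := volume) (-π) π
  rw [← integral_abs_mul_fejerMajorant hT, ← intervalIntegral.integral_const_mul,
    ← intervalIntegral.integral_const_mul, ← intervalIntegral.integral_add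
      (hmaj.const_mul M) (hf.abs.const_mul _)]
  refine intervalIntegral.integral_mono_on (neg_le_self pi_pos.le)
    (hf.abs.mul_continuousOn (continuous_fejerKernel T).continuousOn)
    ((hmaj.const_mul M).add (hf.abs.const_mul _)) fun ω hω => ?_
  exact abs_mul_fejerKernel_le hε hM hnear hT (abs_le.mpr hω)

end LocallyLipschitzAtZero

lemma abs_integral_mul_fejerKernel_sub_le {F : ℝ → ℝ} {ε M : ℝ}
    (hF : IntervalIntegrable F volume (-π) π) (hε : 0 < ε) (hM : 0 ≤ M)
    (hnear : ∀ ω ∈ Set.Icc (-ε) ε, |F ω - F 0| ≤ M * |ω|) {T : ℕ} (hT : T ≠ 0) :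
    |(∫ ω in (-π)..π, F ω * fejerKernel T ω) - 2 * π * F 0| ≤
      M * (2 * π ^ 2 / T * log (1 + T ^ 2)) +
        π ^ 2 / (T * ε ^ 2) * ∫ ω in (-π)..π, |F ω - F 0| := by
  have hK := continuous_fejerKernel T
  have hcentre : (∫ ω in (-π)..π, F ω * fejerKernel T ω) - 2 * π * F 0 =
      ∫ ω in (-π)..π, (F ω - F 0) * fejerKernel T ω := by
    simp only [sub_mul]
    rw [intervalIntegral.integral_sub (hF.mul_continuousOn hK.continuousOn)
      ((hK.intervalIntegrable _ _).const_mul _), intervalIntegral.integral_const_mul,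
      integral_fejerKernel hT]
    ring
  rw [hcentre]
  calc _ ≤ ∫ ω in (-π)..π, |(F ω - F 0) * fejerKernel T ω| :=
        intervalIntegral.abs_integral_le_integral_abs (by linarith [pi_pos])
    _ = ∫ ω in (-π)..π, |F ω - F 0| * fejerKernel T ω := by
        simp only [abs_mul, abs_of_nonneg (fejerKernel_nonneg _ _)]
    _ ≤ _ := integral_abs_mul_fejerKernel_le (hF.sub intervalIntegrable_const) hε hM hnear hT

lemma log_one_add_sq_le {x : ℝ} (hx : 2 ≤ x) : log (1 + x ^ 2) ≤ 3 * log x := by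
  rw [show (3 : ℝ) * log x = log (x ^ 3) by rw [log_pow]; norm_num]
  exact log_le_log (by positivity) (by nlinarith)

lemma div_mul_log_one_add_sq_add_div_le {A B x : ℝ} (hA : 0 ≤ A) (hB : 0 ≤ B) (hx : 2 ≤ x) :
    A / x * log (1 + x ^ 2) + B / x ≤ (3 * A + B / log 2 + 1) * x⁻¹ * log x := by
  have hlog2 : 0 < log 2 := log_pos one_lt_two
  have hlog : log 2 ≤ log x := log_le_log two_pos hx
  have hB' : B ≤ B / log 2 * log x := by
    rw [div_mul_eq_mul_div, le_div_iff₀ hlog2]; exact mul_le_mul_of_nonneg_left hlog hB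
  have hx0 : 0 < x := by linarith
  rw [div_eq_inv_mul, div_eq_inv_mul B, mul_assoc, ← mul_add, mul_comm _ x⁻¹, mul_assoc]
  gcongr
  nlinarith [log_one_add_sq_le hx]

theorem stmt_10_general (F : ℝ → ℝ)
    (hint : IntegrableOn F (Set.Icc (-π) π))
    (ε M : ℝ) (hε : 0 < ε)
    (hdiff : ∀ ω ∈ Set.Icc (-ε) ε, DifferentiableAt ℝ F ω)
    (hbF' : ∀ ω ∈ Set.Icc (-ε) ε, |deriv F ω| ≤ M) :
    ∃ C > 0, ∀ T : ℕ, 2 ≤ T →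
      |(∫ ω in (-π)..π, F ω * ((T : ℝ)⁻¹ *
            ‖∑ t ∈ Finset.Icc 1 T,
              Complex.exp (Complex.I * (t : ℂ) * (ω : ℂ))‖ ^ 2))
          - 2 * π * F 0|
        ≤ C * (T : ℝ)⁻¹ * Real.log T := by
  have h0 : (0 : ℝ) ∈ Set.Icc (-ε) ε := ⟨by linarith, hε.le⟩
  have hM : 0 ≤ M := (abs_nonneg _).trans (hbF' 0 h0)
  have hF : IntervalIntegrable F volume (-π) π :=
    (intervalIntegrable_iff_integrableOn_Icc_of_le (by linarith [pi_pos])).mpr hint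
  have hnear : ∀ ω ∈ Set.Icc (-ε) ε, |F ω - F 0| ≤ M * |ω| := fun ω hω => by
    simpa using (convex_Icc (-ε) ε).norm_image_sub_le_of_norm_deriv_le hdiff hbF' h0 hω
  set A := 2 * π ^ 2 * M
  set B := π ^ 2 / ε ^ 2 * ∫ ω in (-π)..π, |F ω - F 0|
  have hA : 0 ≤ A := by positivity
  have hB : 0 ≤ B := mul_nonneg (by positivity)
    (intervalIntegral.integral_nonneg (by linarith [pi_pos]) fun ω _ => abs_nonneg _)
  have hlog2 : 0 < log 2 := log_pos one_lt_two
  refine ⟨3 * A + B / log 2 + 1, by positivity, fun T hT => ?_⟩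
  calc |(∫ ω in (-π)..π, F ω * fejerKernel T ω) - 2 * π * F 0|
      ≤ A / T * log (1 + T ^ 2) + B / T :=
        (abs_integral_mul_fejerKernel_sub_le hF hε hM hnear (by omega)).trans_eq (by ring)
    _ ≤ _ := div_mul_log_one_add_sq_add_div_le hA hB (by exact_mod_cast hT)

/-- Let `F` be `2π`-periodic and integrable on `[-π, π]`, bounded and with
bounded derivative on a neighborhood `[-ε, ε]` of zero. Then there is `C > 0` such that
for every `T ≥ 2`,
`|∫_{-π}^{π} F(ω) T⁻¹ |∑_{t=1}^{T} exp(itω)|² dω - 2π F(0)| ≤ C T⁻¹ log T`. -/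
theorem stmt_10 (F : ℝ → ℝ) (hper : ∀ x, F (x + 2 * π) = F x)
    (hint : IntegrableOn F (Set.Icc (-π) π))
    (ε M : ℝ) (hε : 0 < ε) (hεπ : ε ≤ π) (hM : 0 < M)
    (hdiff : ∀ ω ∈ Set.Icc (-ε) ε, DifferentiableAt ℝ F ω)
    (hbF : ∀ ω ∈ Set.Icc (-ε) ε, |F ω| ≤ M)
    (hbF' : ∀ ω ∈ Set.Icc (-ε) ε, |deriv F ω| ≤ M) :
    ∃ C > 0, ∀ T : ℕ, 2 ≤ T →
      |(∫ ω in (-π)..π, F ω * ((T : ℝ)⁻¹ *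
            ‖∑ t ∈ Finset.Icc 1 T,
              Complex.exp (Complex.I * (t : ℂ) * (ω : ℂ))‖ ^ 2))
          - 2 * π * F 0|
        ≤ C * (T : ℝ)⁻¹ * Real.log T :=
  stmt_10_general F hint ε M hε hdiff hbF'
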